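/- Let Λ ⊂ ℝᵈ be a lattice and V a Λ-rational subspace with dim(V ∩ ({0}×ℝⁿ)) = L₋ and dim V = L₊ + L₋, where d = m + n. With g_t = diag(e^{t/m} I_m, e^{-t/n} I_n), for all t ≥ 0 the covolume of g_t(V ∩ Λ) satisfies log‖g_t V‖ ≤ log‖V‖ + (L₊/m - L₋/n)t + O(1). -/

import Mathlib

/-! Pick a basis `w` of `V` whose last `L₋` vectors lie in `V ∩ 𝓛`. Writing `w = A v`, both
`det gram w` and `det gram (g_t w)` are `(det A)²` times the corresponding Gram determinants of
`v`, so `‖g_t V‖ / ‖V‖ = covol (g_t w) / covol w`. By Hadamard's inequality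
`covol (g_t w) ≤ ∏ ‖g_t w_k‖`, and `g_t` stretches any vector by at most `e^{t/m}` while it
shrinks the vectors of `𝓛` by exactly `e^{-t/n}`. Hence the claim holds with
`C = log ∏ ‖w_k‖ - log covol w`. -/

open scoped RealInnerProductSpace

/-- The diagonal flow `g_t = diag(e^{t/m} I_m, e^{-t/n} I_n)` acting on `ℝ^{m+n}`. -/
noncomputable def gtFlow (m n : ℕ) (t : ℝ) (x : EuclideanSpace ℝ (Fin (m + n))) :
    EuclideanSpace ℝ (Fin (m + n)) :=
  WithLp.toLp 2 (fun i : Fin (m + n) => if (i : ℕ) < m then Real.exp (t / m) * x i else Real.exp (-t / n) * x i)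

/-- The contracted subspace `𝓛 = {0} × ℝⁿ ⊂ ℝ^{m+n}`. -/
def vertSub (m n : ℕ) : Submodule ℝ (EuclideanSpace ℝ (Fin (m + n))) where
  carrier := {x | ∀ i : Fin (m + n), (i : ℕ) < m → x i = 0}
  add_mem' := by
    intro a b ha hb i hi
    show a i + b i = 0
    rw [ha i hi, hb i hi, add_zero]
  zero_mem' := fun i _ => rfl
  smul_mem' := by
    intro c a ha i hi
    show c * a i = 0
    rw [ha i hi, mul_zero]

/-- Covolume of the lattice spanned by `v` (square root of the Gram determinant). -/
noncomputable def gramCovol {d q : ℕ} (v : Fin q → EuclideanSpace ℝ (Fin d)) : ℝ :=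
  Real.sqrt (Matrix.det (Matrix.of fun i j => (⟪v i, v j⟫ : ℝ)))

open Matrix InnerProductSpace Module

section Gram

variable {E F ι : Type*} [NormedAddCommGroup E] [InnerProductSpace ℝ E]
  [NormedAddCommGroup F] [InnerProductSpace ℝ F] [Fintype ι]

theorem Matrix.det_gram_le_prod_norm_sq [DecidableEq ι] (f : ι → E) :
    (gram ℝ f).det ≤ ∏ i, ‖f i‖ ^ 2 := by
  by_cases hf : LinearIndependent ℝ f
  swap
  · rw [← det_gram_ne_zero_iff_linearIndependent (𝕜 := ℝ), not_not] at hf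
    rw [hf]; positivity
  let _ : LinearOrder ι := LinearOrder.lift' _ (Fintype.equivFin ι).injective
  let _ : LocallyFiniteOrderBot ι := .ofIic ι (fun a => {x | x ≤ a}) (by simp)
  let S := Submodule.span ℝ (Set.range f)
  have : FiniteDimensional ℝ S := FiniteDimensional.span_of_finite ℝ (Set.finite_range f)
  let f' : ι → S := fun i => ⟨f i, Submodule.subset_span ⟨i, rfl⟩⟩
  have hS : finrank ℝ S = Fintype.card ι := finrank_span_eq_card hf
  -- In the Gram–Schmidt basis of `S` the coordinate matrix of `f'` is upper triangular.
  let b := gramSchmidtOrthonormalBasis hS f'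
  have hgram : gram ℝ f = gram ℝ f' := by ext i j; simp [f']
  have hdet := gramSchmidtOrthonormalBasis_det (𝕜 := ℝ) hS f'
  have hM : (of fun i j => b.repr (f' j) i) = b.toBasis.toMatrix f' := by
    ext i j; simp [Basis.toMatrix_apply]
  rw [hgram, gram_eq_conjTranspose_mul b, det_mul, det_conjTranspose, hM, ← Basis.det_apply,
    hdet, star_trivial, ← Finset.prod_mul_distrib]
  refine Finset.prod_le_prod (fun i _ => mul_self_nonneg _) fun i _ => ?_
  have hle := abs_real_inner_le_norm (b i) (f' i)
  rw [b.norm_eq_one, one_mul] at hle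
  rw [← sq, ← sq_abs]
  exact pow_le_pow_left₀ (abs_nonneg _) hle 2

theorem Matrix.gram_sum_smul (A : Matrix ι ι ℝ) (x : ι → E) :
    gram ℝ (fun j => ∑ i, A j i • x i) = A * gram ℝ x * Aᵀ := by
  ext j k
  simp only [gram_apply, mul_apply, transpose_apply, sum_inner, inner_sum, real_inner_smul_left,
    real_inner_smul_right, Finset.sum_mul]
  exact Finset.sum_congr rfl fun i _ => Finset.sum_congr rfl fun l _ => by ring

/-- Writing `y = A x`, both sides equal `(det A)² * det gram (f ∘ x) * det gram x`. -/
theorem Matrix.det_gram_comp_mul_det_gram [DecidableEq ι] (f : E →ₗ[ℝ] F) {x y : ι → E}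
    (hy : ∀ j, y j ∈ Submodule.span ℝ (Set.range x)) :
    (gram ℝ (f ∘ x)).det * (gram ℝ y).det = (gram ℝ (f ∘ y)).det * (gram ℝ x).det := by
  choose A hA using fun j => (Submodule.mem_span_range_iff_exists_fun ℝ).mp (hy j)
  let B : Matrix ι ι ℝ := of A
  have hy' : y = fun j => ∑ i, B j i • x i := funext fun j => (hA j).symm
  have hfy : f ∘ y = fun j => ∑ i, B j i • (f ∘ x) i := by
    funext j; simp [hy', map_sum, B]
  rw [hfy, hy', gram_sum_smul, gram_sum_smul, det_mul, det_mul, det_mul, det_mul]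
  ring

end Gram

theorem Submodule.exists_linearIndependent_natAdd_mem {K M : Type*} [DivisionRing K]
    [AddCommGroup M] [Module K M] {V W : Submodule K M} [FiniteDimensional K V] (hWV : W ≤ V)
    {k l : ℕ} (hV : finrank K V = k + l) (hW : finrank K W = l) :
    ∃ w : Fin (k + l) → M,
      (∀ i, w i ∈ V) ∧ (∀ j, w (Fin.natAdd k j) ∈ W) ∧ LinearIndependent K w := by
  obtain ⟨C, hC⟩ := W.exists_isCompl
  have hsup : W ⊔ C ⊓ V = V := by
    rw [← sup_inf_assoc_of_le C hWV, hC.sup_eq_top, top_inf_eq]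
  have hdisj : Disjoint W (C ⊓ V) := hC.disjoint.mono_right inf_le_left
  have : FiniteDimensional K W := Submodule.finiteDimensional_of_le hWV
  have : FiniteDimensional K ↥(C ⊓ V) := Submodule.finiteDimensional_of_le inf_le_right
  have hP : finrank K ↥(C ⊓ V) = k := by
    have := Submodule.finrank_sup_add_finrank_inf_eq W (C ⊓ V)
    rw [hsup, hdisj.eq_bot, finrank_bot] at this
    omega
  let bP := finBasisOfFinrankEq K _ hP
  let bW := finBasisOfFinrankEq K _ hW
  let p : Fin k → M := fun i => bP i
  let q : Fin l → M := fun j => bW j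
  have hp : LinearIndependent K p :=
    bP.linearIndependent.map' (C ⊓ V).subtype (C ⊓ V).ker_subtype
  have hq : LinearIndependent K q := bW.linearIndependent.map' W.subtype W.ker_subtype
  have hpq : Disjoint (span K (Set.range p)) (span K (Set.range q)) :=
    hdisj.symm.mono (span_le.mpr (Set.range_subset_iff.mpr fun i => (bP i).2))
      (span_le.mpr (Set.range_subset_iff.mpr fun j => (bW j).2))
  refine ⟨Sum.elim p q ∘ finSumFinEquiv.symm, fun i => ?_, fun j => by simp [q],
    (hp.sum_type hq hpq).comp _ finSumFinEquiv.symm.injective⟩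
  change Sum.elim p q (finSumFinEquiv.symm i) ∈ V
  rcases finSumFinEquiv.symm i with i | j
  · exact (bP i).2.2
  · exact hWV (bW j).2

section Flow

variable {m n : ℕ} {t : ℝ}

theorem gtFlow_neg_gtFlow (x : EuclideanSpace ℝ (Fin (m + n))) :
    gtFlow m n (-t) (gtFlow m n t x) = x := by
  ext i
  by_cases h : (i : ℕ) < m <;> simp [gtFlow, h, ← mul_assoc, ← Real.exp_add, neg_div]

variable (m n t) in
noncomputable def gtFlowLinearEquiv :
    EuclideanSpace ℝ (Fin (m + n)) ≃ₗ[ℝ] EuclideanSpace ℝ (Fin (m + n)) where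
  toFun := gtFlow m n t
  invFun := gtFlow m n (-t)
  map_add' x y := by ext i; by_cases h : (i : ℕ) < m <;> simp [gtFlow, h, mul_add]
  map_smul' c x := by ext i; by_cases h : (i : ℕ) < m <;> simp [gtFlow, h, mul_left_comm]
  left_inv := gtFlow_neg_gtFlow
  right_inv x := by simpa using gtFlow_neg_gtFlow (t := -t) x

theorem norm_gtFlow_le (ht : 0 ≤ t) (x : EuclideanSpace ℝ (Fin (m + n))) :
    ‖gtFlow m n t x‖ ≤ Real.exp (t / m) * ‖x‖ := by
  have hexp : Real.exp (-t / n) ≤ Real.exp (t / m) := by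
    rw [Real.exp_le_exp, neg_div]
    linarith [div_nonneg ht m.cast_nonneg, div_nonneg ht n.cast_nonneg]
  have hcoord : ∀ i, ‖gtFlow m n t x i‖ ≤ Real.exp (t / m) * ‖x i‖ := by
    intro i
    by_cases h : (i : ℕ) < m
    · simp [gtFlow, h]
    · simp only [gtFlow, h, if_false, PiLp.toLp_apply, norm_mul, Real.norm_eq_abs,
        Real.abs_exp]
      gcongr
  rw [EuclideanSpace.norm_eq, EuclideanSpace.norm_eq, ← Real.sqrt_sq (Real.exp_pos _).le,
    ← Real.sqrt_mul (sq_nonneg _), Finset.mul_sum]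
  gcongr with i
  rw [← mul_pow]
  exact pow_le_pow_left₀ (norm_nonneg _) (hcoord i) 2

theorem gtFlow_of_mem_vertSub {x : EuclideanSpace ℝ (Fin (m + n))} (hx : x ∈ vertSub m n) :
    gtFlow m n t x = Real.exp (-t / n) • x := by
  ext i
  by_cases h : (i : ℕ) < m
  · simp [gtFlow, h, hx i h]
  · simp [gtFlow, h]

theorem prod_norm_gtFlow_le {a b : ℕ} (ht : 0 ≤ t)
    (w : Fin (a + b) → EuclideanSpace ℝ (Fin (m + n)))
    (hw : ∀ j, w (Fin.natAdd a j) ∈ vertSub m n) :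
    ∏ k, ‖gtFlow m n t (w k)‖ ≤ Real.exp ((a / m - b / n) * t) * ∏ k, ‖w k‖ := by
  have hsplit :
      Real.exp ((a / m - b / n) * t) = Real.exp (t / m) ^ a * Real.exp (-t / n) ^ b := by
    rw [← Real.exp_nat_mul, ← Real.exp_nat_mul, ← Real.exp_add]
    ring_nf
  simp only [Fin.prod_univ_add, hsplit, gtFlow_of_mem_vertSub (hw _), norm_smul,
    Real.norm_eq_abs, Real.abs_exp]
  calc (∏ i, ‖gtFlow m n t (w (Fin.castAdd b i))‖) *
        ∏ j, Real.exp (-t / n) * ‖w (Fin.natAdd a j)‖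
      ≤ (∏ i, Real.exp (t / m) * ‖w (Fin.castAdd b i)‖) *
          ∏ j, Real.exp (-t / n) * ‖w (Fin.natAdd a j)‖ := by
        gcongr with i
        exact norm_gtFlow_le ht _
    _ = _ := by simp only [Finset.prod_mul_distrib, Finset.prod_const, Finset.card_univ,
          Fintype.card_fin]; ring

end Flow

section Covolume

variable {d q : ℕ}

theorem gramCovol_eq_sqrt_det_gram (v : Fin q → EuclideanSpace ℝ (Fin d)) :
    gramCovol v = √(gram ℝ v).det :=
  rfl

theorem gramCovol_pos {v : Fin q → EuclideanSpace ℝ (Fin d)} (hv : LinearIndependent ℝ v) :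
    0 < gramCovol v :=
  Real.sqrt_pos.mpr (posDef_gram_of_linearIndependent hv).det_pos

theorem gramCovol_le_prod_norm (v : Fin q → EuclideanSpace ℝ (Fin d)) :
    gramCovol v ≤ ∏ i, ‖v i‖ := by
  calc gramCovol v ≤ √(∏ i, ‖v i‖ ^ 2) := Real.sqrt_le_sqrt (det_gram_le_prod_norm_sq v)
    _ = ∏ i, ‖v i‖ := by
      rw [Finset.prod_pow, Real.sqrt_sq (Finset.prod_nonneg fun i _ => norm_nonneg _)]

theorem gramCovol_map_mul_gramCovol
    (f : EuclideanSpace ℝ (Fin d) →ₗ[ℝ] EuclideanSpace ℝ (Fin d))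
    {x y : Fin q → EuclideanSpace ℝ (Fin d)}
    (hy : ∀ j, y j ∈ Submodule.span ℝ (Set.range x)) :
    gramCovol (fun i => f (x i)) * gramCovol y = gramCovol (fun i => f (y i)) * gramCovol x := by
  simp only [gramCovol_eq_sqrt_det_gram]
  rw [← Real.sqrt_mul (posSemidef_gram ℝ _).det_nonneg,
    ← Real.sqrt_mul (posSemidef_gram ℝ _).det_nonneg]
  exact congrArg _ (det_gram_comp_mul_det_gram f hy)

end Covolume

theorem gtFlow_covolume_upper_bound_general (m n : ℕ)
    (Lplus Lminus : ℕ) (v : Fin (Lplus + Lminus) → EuclideanSpace ℝ (Fin (m + n)))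
    (hind : LinearIndependent ℝ v)
    (hvert : Module.finrank ℝ
      ↥(Submodule.span ℝ (Set.range v) ⊓ vertSub m n) = Lminus) :
    ∃ C : ℝ, ∀ t : ℝ, 0 ≤ t →
      Real.log (gramCovol fun i => gtFlow m n t (v i)) ≤
        Real.log (gramCovol v) +
          ((Lplus : ℝ) / (m : ℝ) - (Lminus : ℝ) / (n : ℝ)) * t + C := by
  obtain ⟨w, hwV, hwvert, hw⟩ := Submodule.exists_linearIndependent_natAdd_mem
    (inf_le_left : Submodule.span ℝ (Set.range v) ⊓ vertSub m n ≤ _)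
    (by rw [finrank_span_eq_card hind, Fintype.card_fin]) hvert
  refine ⟨Real.log (∏ k, ‖w k‖) - Real.log (gramCovol w), fun t ht => ?_⟩
  set g := gtFlowLinearEquiv m n t
  have hcov_v := gramCovol_pos hind
  have hbound : gramCovol (fun i => g (v i)) * gramCovol w ≤
      Real.exp ((Lplus / m - Lminus / n) * t) * (∏ k, ‖w k‖) * gramCovol v := by
    calc gramCovol (fun i => g (v i)) * gramCovol w
        = gramCovol (fun k => g (w k)) * gramCovol v :=
          gramCovol_map_mul_gramCovol g.toLinearMap hwV
      _ ≤ (∏ k, ‖g (w k)‖) * gramCovol v :=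
          mul_le_mul_of_nonneg_right (gramCovol_le_prod_norm _) hcov_v.le
      _ ≤ _ :=
          mul_le_mul_of_nonneg_right (prod_norm_gtFlow_le ht w fun j => (hwvert j).2) hcov_v.le
  have hcov_gv : 0 < gramCovol fun i => g (v i) := gramCovol_pos (hind.map' g.toLinearMap g.ker)
  have hcov_w := gramCovol_pos hw
  have hprod : 0 < ∏ k, ‖w k‖ := Finset.prod_pos fun k _ => norm_pos_iff.mpr (hw.ne_zero k)
  have hlog := Real.log_le_log (by positivity) hbound
  rw [Real.log_mul hcov_gv.ne' hcov_w.ne', Real.log_mul (by positivity) hcov_v.ne',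
    Real.log_mul (by positivity) hprod.ne', Real.log_exp] at hlog
  change Real.log (gramCovol fun i => g (v i)) ≤ _
  linarith

/-- Let `Λ ⊂ ℝᵈ` (`d = m + n`) be a lattice and `V` a `Λ`-rational subspace of dimension
`L₊ + L₋` with `dim(V ∩ ({0}×ℝⁿ)) = L₋` (here `v` is a `ℤ`-basis of `V ∩ Λ`). Then for all
`t ≥ 0`, `log‖g_t V‖ ≤ log‖V‖ + (L₊/m - L₋/n)t + O(1)`. -/
theorem gtFlow_covolume_upper_bound (m n : ℕ) (hm : 0 < m) (hn : 0 < n)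
    (b : Module.Basis (Fin (m + n)) ℝ (EuclideanSpace ℝ (Fin (m + n))))
    (Lplus Lminus : ℕ) (v : Fin (Lplus + Lminus) → EuclideanSpace ℝ (Fin (m + n)))
    (hmem : ∀ i, v i ∈ Submodule.span ℤ (Set.range ⇑b))
    (hind : LinearIndependent ℝ v)
    (hrat : Submodule.span ℤ (Set.range v) =
      Submodule.span ℤ (Set.range ⇑b) ⊓
        (Submodule.span ℝ (Set.range v)).restrictScalars ℤ)
    (hvert : Module.finrank ℝ
      ↥(Submodule.span ℝ (Set.range v) ⊓ vertSub m n) = Lminus) :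
    ∃ C : ℝ, ∀ t : ℝ, 0 ≤ t →
      Real.log (gramCovol fun i => gtFlow m n t (v i)) ≤
        Real.log (gramCovol v) +
          ((Lplus : ℝ) / (m : ℝ) - (Lminus : ℝ) / (n : ℝ)) * t + C :=
  gtFlow_covolume_upper_bound_general m n Lplus Lminus v hind hvert
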